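/- arXiv:2109.00972 — 3 statements merged into one kernel-verified Lean document; each statement's English description precedes it below -/
import Mathlib

section
/- Continuity of the unordered roots of a monic complex polynomial: let k ≥ 1 and let a : Fin k → ℂ and r : Fin k → ℂ satisfy X^k + ∑_{i<k} (a i) • X^i = ∏_{i<k} (X − C (r i)) in ℂ[X]. Then for every ε > 0 there exists δ > 0 such that for all b : Fin k → ℂ and s : Fin k → ℂ with ‖b i − a i‖ < δ for all i and with X^k + ∑_{i<k} (b i) • X^i = ∏_{i<k} (X − C (s i)), there exists a permutation σ : Equiv.Perm (Fin k) such that ‖s i − r (σ i)‖ < ε for every i : Fin k. -/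
open Polynomial

/-!
The coefficient map `s ↦ ∏ (X - C sᵢ)` is continuous, and by Cauchy's bound its fibres over a
bounded set of coefficients are bounded. Hence the tuples `s` that are `ε`-far from every
rearrangement of `r`, and whose coefficients lie within `1` of those of `r`, form a compact set.
Its image under the coefficient map is compact, and it misses the coefficients of `r` because a
monic polynomial determines its multiset of roots; so that image keeps a positive distance from
the coefficients of `r`.
-/

theorem Fintype.exists_perm_eq_comp_of_map_univ_eq {ι α : Type*} [Fintype ι] {t r : ι → α}
    (h : Finset.univ.val.map t = Finset.univ.val.map r) :
    ∃ σ : Equiv.Perm ι, ∀ i, t i = r (σ i) := by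
  classical
  have hcard (v : α) : Fintype.card {i // t i = v} = Fintype.card {i // r i = v} := by
    simpa [Fintype.card_subtype, Finset.card, Finset.filter_val, Multiset.count_map, eq_comm]
      using congr_arg (Multiset.count v) h
  exact ⟨Equiv.ofFiberEquiv fun v => Fintype.equivOfCardEq (hcard v),
    fun i => (Equiv.ofFiberEquiv_map _ i).symm⟩

namespace Polynomial

theorem roots_finsetProd_X_sub_C {R ι : Type*} [CommRing R] [IsDomain R] (s : Finset ι)
    (f : ι → R) : (∏ i ∈ s, (X - C (f i))).roots = s.val.map f := by
  rw [roots_prod _ _ (monic_prod_X_sub_C f s).ne_zero]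
  simp [Multiset.bind_singleton]

theorem continuous_coeff_prod {R ι α : Type*} [CommSemiring R] [TopologicalSpace R]
    [IsTopologicalSemiring R] [TopologicalSpace α] {f : ι → α → R[X]} (s : Finset ι)
    (hf : ∀ i ∈ s, ∀ n, Continuous fun x => (f i x).coeff n) (n : ℕ) :
    Continuous fun x => (∏ i ∈ s, f i x).coeff n := by
  induction s using Finset.cons_induction generalizing n with
  | empty => simpa using continuous_const
  | cons i s hi ih =>
    simp only [Finset.prod_cons, coeff_mul]
    refine continuous_finsetSum _ fun p _ => ?_
    exact (hf i (Finset.mem_cons_self i s) _).mul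
      (ih (fun j hj => hf j (Finset.mem_cons_of_mem hj)) _)

theorem Monic.nnnorm_lt_of_isRoot {K : Type*} [NormedDivisionRing K] {p : K[X]} (hp : p.Monic)
    {B : NNReal} (hB : ∀ j < p.natDegree, ‖p.coeff j‖₊ ≤ B) {z : K} (hz : p.IsRoot z) :
    ‖z‖₊ < B + 1 := by
  refine (hz.norm_lt_cauchyBound hp.ne_zero).trans_le ?_
  simp only [cauchyBound, hp.leadingCoeff, nnnorm_one, div_one]
  gcongr
  exact Finset.sup_le fun j hj => hB j (Finset.mem_range.mp hj)

end Polynomial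

section CommRing

variable {R : Type*} [CommRing R] {k : ℕ}

/-- The non-leading coefficients of the monic polynomial with roots `s`. -/
noncomputable def coeffsOfRoots (s : Fin k → R) : Fin k → R :=
  fun j => (∏ i, (X - C (s i))).coeff j

theorem coeffsOfRoots_eq_of_X_pow_add_sum_eq {b s : Fin k → R}
    (h : (X ^ k + ∑ i : Fin k, b i • X ^ (i : ℕ) : R[X]) = ∏ i : Fin k, (X - C (s i))) :
    coeffsOfRoots s = b := by
  ext j
  simp [coeffsOfRoots, ← h, coeff_X_pow, Fin.val_eq_val, j.isLt.ne]

theorem continuous_coeffsOfRoots [TopologicalSpace R] [IsTopologicalRing R] :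
    Continuous (coeffsOfRoots : (Fin k → R) → Fin k → R) := by
  refine continuous_pi fun j => continuous_coeff_prod _ (fun i _ n => ?_) _
  rcases n with _ | n
  · simp only [coeff_sub, coeff_X_zero, coeff_C_zero, zero_sub]
    fun_prop
  · simpa [coeff_C] using continuous_const

theorem natDegree_prod_X_sub_C [Nontrivial R] (s : Fin k → R) : (∏ i, (X - C (s i))).natDegree = k := by
  simp

theorem prod_X_sub_C_eq_of_coeffsOfRoots_eq [Nontrivial R] {s t : Fin k → R}
    (h : coeffsOfRoots s = coeffsOfRoots t) :
    ∏ i, (X - C (s i)) = ∏ i, (X - C (t i)) := by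
  ext n
  rcases lt_trichotomy n k with hn | rfl | hn
  · exact congr_fun h ⟨n, hn⟩
  · have hs := (monic_prod_X_sub_C s Finset.univ).coeff_natDegree
    have ht := (monic_prod_X_sub_C t Finset.univ).coeff_natDegree
    rw [natDegree_prod_X_sub_C s] at hs
    rw [natDegree_prod_X_sub_C t] at ht
    rw [hs, ht]
  · rw [coeff_eq_zero_of_natDegree_lt, coeff_eq_zero_of_natDegree_lt] <;>
      rwa [natDegree_prod_X_sub_C]

theorem exists_perm_of_coeffsOfRoots_eq [IsDomain R] {s t : Fin k → R}
    (h : coeffsOfRoots s = coeffsOfRoots t) : ∃ σ : Equiv.Perm (Fin k), ∀ i, s i = t (σ i) := by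
  apply Fintype.exists_perm_eq_comp_of_map_univ_eq
  rw [← roots_finsetProd_X_sub_C, ← roots_finsetProd_X_sub_C,
    prod_X_sub_C_eq_of_coeffsOfRoots_eq h]

end CommRing

section NormedField

variable {K : Type*} [NormedField K] {k : ℕ}

theorem norm_le_norm_coeffsOfRoots_add_one (s : Fin k → K) : ‖s‖ ≤ ‖coeffsOfRoots s‖ + 1 := by
  refine (pi_norm_le_iff_of_nonneg (by positivity)).2 fun i => ?_
  have hroot : (∏ i, (X - C (s i))).IsRoot (s i) := by
    simp only [IsRoot, eval_prod, eval_sub, eval_X, eval_C]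
    exact Finset.prod_eq_zero (Finset.mem_univ i) (sub_self _)
  have := (monic_prod_X_sub_C s Finset.univ).nnnorm_lt_of_isRoot (B := ‖coeffsOfRoots s‖₊)
    (fun j hj => ?_) hroot
  · exact_mod_cast this.le
  · rw [natDegree_prod_X_sub_C] at hj
    exact nnnorm_le_pi_nnnorm (coeffsOfRoots s) ⟨j, hj⟩

variable [ProperSpace K]

theorem exists_perm_norm_sub_lt_of_dist_coeffsOfRoots_lt (r : Fin k → K) {ε : ℝ} (hε : 0 < ε) :
    ∃ δ > 0, ∀ s, dist (coeffsOfRoots s) (coeffsOfRoots r) < δ →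
      ∃ σ : Equiv.Perm (Fin k), ∀ i, ‖s i - r (σ i)‖ < ε := by
  set F : (Fin k → K) → Fin k → K := coeffsOfRoots
  set far := {s : Fin k → K | ∀ σ : Equiv.Perm (Fin k), ∃ i, ε ≤ ‖s i - r (σ i)‖}
  set R := ‖F r‖ + 2
  have hfar : IsClosed far := by
    simp only [far, Set.ofPred_forall, Set.ofPred_exists]
    exact isClosed_iInter fun σ => isClosed_iUnion_of_finite fun i =>
      isClosed_le continuous_const (by fun_prop)
  have hcpt : IsCompact (F '' (Metric.closedBall 0 R ∩ far)) :=
    ((isCompact_closedBall 0 R).inter_right hfar).image continuous_coeffsOfRoots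
  have hr : F r ∉ F '' (Metric.closedBall 0 R ∩ far) := by
    rintro ⟨s, ⟨-, hs⟩, hsr⟩
    obtain ⟨σ, hσ⟩ := exists_perm_of_coeffsOfRoots_eq hsr
    obtain ⟨i, hi⟩ := hs σ
    rw [hσ i, sub_self, norm_zero] at hi
    exact hi.not_gt hε
  obtain ⟨δ, hδ, hball⟩ := Metric.isOpen_iff.1 hcpt.isClosed.isOpen_compl _ hr
  refine ⟨min δ 1, by positivity, fun s hs => ?_⟩
  have hsR : s ∈ Metric.closedBall 0 R := by
    rw [mem_closedBall_zero_iff]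
    calc ‖s‖ ≤ ‖F s‖ + 1 := norm_le_norm_coeffsOfRoots_add_one s
      _ ≤ ‖F r‖ + dist (F s) (F r) + 1 := by
        rw [dist_eq_norm]; gcongr; exact norm_le_insert' _ _
      _ ≤ R := by linarith [min_le_right δ 1]
  by_contra! hnear
  exact hball (hs.trans_le (min_le_left _ _)) ⟨s, ⟨hsR, hnear⟩, rfl⟩

end NormedField

theorem roots_continuous_general (k : ℕ) (a r : Fin k → ℂ)
    (h : (X ^ k + ∑ i : Fin k, a i • X ^ (i : ℕ) : Polynomial ℂ) =
      ∏ i : Fin k, (X - C (r i))) :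
    ∀ ε > 0, ∃ δ > 0, ∀ b s : Fin k → ℂ,
      (∀ i, ‖b i - a i‖ < δ) →
      (X ^ k + ∑ i : Fin k, b i • X ^ (i : ℕ) : Polynomial ℂ) =
        ∏ i : Fin k, (X - C (s i)) →
      ∃ σ : Equiv.Perm (Fin k), ∀ i, ‖s i - r (σ i)‖ < ε := by
  intro ε hε
  obtain ⟨δ, hδ, hnear⟩ := exists_perm_norm_sub_lt_of_dist_coeffsOfRoots_lt r hε
  refine ⟨δ, hδ, fun b s hb hs => hnear s ?_⟩
  rw [coeffsOfRoots_eq_of_X_pow_add_sum_eq hs,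
    coeffsOfRoots_eq_of_X_pow_add_sum_eq h, dist_pi_lt_iff hδ]
  simpa only [dist_eq_norm] using hb

theorem roots_continuous (k : ℕ) (hk : 1 ≤ k) (a r : Fin k → ℂ)
    (h : (X ^ k + ∑ i : Fin k, a i • X ^ (i : ℕ) : Polynomial ℂ) =
      ∏ i : Fin k, (X - C (r i))) :
    ∀ ε > 0, ∃ δ > 0, ∀ b s : Fin k → ℂ,
      (∀ i, ‖b i - a i‖ < δ) →
      (X ^ k + ∑ i : Fin k, b i • X ^ (i : ℕ) : Polynomial ℂ) =
        ∏ i : Fin k, (X - C (s i)) →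
      ∃ σ : Equiv.Perm (Fin k), ∀ i, ‖s i - r (σ i)‖ < ε :=
  roots_continuous_general k a r h
end

section
/- Odd total root count forces a real root of odd multiplicity: if p : Polynomial ℝ has odd natural degree (Odd p.natDegree), then there exists x : ℝ such that the root multiplicity of x in p, Polynomial.rootMultiplicity x p, is odd. -/
open Polynomial

theorem odd_degree_odd_multiplicity_root (p : Polynomial ℝ) (h : Odd p.natDegree) :
    ∃ x : ℝ, Odd (Polynomial.rootMultiplicity x p) := by
  by_contra hc
  push_neg at hc
  simp only [Nat.not_odd_iff_even] at hc
  have hp : p ≠ 0 := by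
    rintro rfl
    simp [Nat.odd_iff] at h
  set f : ℝ →+* ℂ := algebraMap ℝ ℂ with hf
  have hfinj : Function.Injective f := (algebraMap ℝ ℂ).injective
  set q : Polynomial ℂ := p.map f with hqdef
  have hq : q ≠ 0 := (Polynomial.map_ne_zero_iff hfinj).mpr hp
  have hcard : p.natDegree = Multiset.card q.roots :=
    (IsAlgClosed.card_roots_map_eq_natDegree_of_injective p hfinj).symm
  -- conjugation invariance of the root multiset
  have hqconj : q.map (starRingEnd ℂ) = q := by
    rw [hqdef, Polynomial.map_map]
    congr 1
    ext x
    simp [hf]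
  have hroots : q.roots.map (starRingEnd ℂ) = q.roots := by
    have := Polynomial.Splits.roots_map (IsAlgClosed.splits q) (starRingEnd ℂ)
    rw [hqconj] at this
    exact this.symm
  have hcount : ∀ z : ℂ, q.roots.count ((starRingEnd ℂ) z) = q.roots.count z := by
    intro z
    conv_lhs => rw [← hroots]
    exact Multiset.count_map_eq_count' _ _ (starRingEnd ℂ).injective z
  -- real roots have even multiplicity
  have hreal : ∀ x : ℝ, Even (q.roots.count (x : ℂ)) := by
    intro x
    rw [Polynomial.count_roots, hqdef,
      show ((x : ℂ)) = f x from rfl, ← Polynomial.eq_rootMultiplicity_map hfinj]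
    exact hc x
  -- sum up counts mod 2
  have hsum : (Multiset.card q.roots : ZMod 2)
      = ∑ z ∈ q.roots.toFinset, (q.roots.count z : ZMod 2) := by
    rw [← Nat.cast_sum]
    congr 1
    exact (Multiset.toFinset_sum_count_eq q.roots).symm
  have hzero : ∑ z ∈ q.roots.toFinset, (q.roots.count z : ZMod 2) = 0 := by
    refine Finset.sum_involution (fun z _ => (starRingEnd ℂ) z) ?_ ?_ ?_ ?_
    · intro z _
      rw [hcount z, ← two_mul]
      rw [show (2 : ZMod 2) = 0 from rfl, zero_mul]
    · intro z _ hz hconj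
      apply hz
      have hzre : z = (z.re : ℂ) := (Complex.conj_eq_iff_re.mp hconj).symm
      rw [hzre]
      have := hreal z.re
      rw [Nat.even_iff] at this
      exact (ZMod.natCast_eq_zero_iff _ 2).mpr (Nat.dvd_of_mod_eq_zero this)
    · intro z hz
      rw [Multiset.mem_toFinset] at hz ⊢
      rwa [← Multiset.count_pos, hcount, Multiset.count_pos]
    · intro z _
      exact Complex.conj_conj z
  rw [hzero] at hsum
  rw [← hcard] at hsum
  have : (2 : ℕ) ∣ p.natDegree := by
    rwa [← ZMod.natCast_eq_zero_iff]
  rw [Nat.odd_iff] at h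
  omega
end

section
/- Sign change characterizes odd-multiplicity roots: for a nonzero p : Polynomial ℝ, there exist a b : ℝ with p.eval a < 0 and 0 < p.eval b if and only if there exists x : ℝ such that Polynomial.rootMultiplicity x p is odd. -/
/-!
Write `p = (X - x)^m q` with `m` the multiplicity of `x` and `q(x) ≠ 0`. Near `x`, `q` keeps the
sign of `q(x)`, so `p` changes sign at `x` exactly when `m` is odd. Conversely, a sign change of `p`
produces a root `x` by the intermediate value theorem; if its multiplicity is even, the factor
`(X - x)^m` is nonnegative, so `q` changes sign as well, has smaller degree, and keeps the
multiplicities of all roots other than `x`.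
-/

open Filter Topology

namespace Polynomial

section CommRing

variable {R : Type*} [CommRing R]

theorem eval_eq_sub_pow_rootMultiplicity_mul_eval_divByMonic (p : R[X]) (x y : R) :
    p.eval y = (y - x) ^ p.rootMultiplicity x * (p /ₘ (X - C x) ^ p.rootMultiplicity x).eval y := by
  conv_lhs => rw [← p.pow_mul_divByMonic_rootMultiplicity_eq x]
  rw [eval_mul, eval_pow, eval_sub, eval_X, eval_C]

theorem natDegree_divByMonic_pow_rootMultiplicity_lt {p : R[X]} {x : R} (hp : p ≠ 0)
    (hx : p.IsRoot x) : (p /ₘ (X - C x) ^ p.rootMultiplicity x).natDegree < p.natDegree := by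
  have : Nontrivial R := Nontrivial.of_polynomial_ne hp
  refine natDegree_lt_natDegree ?_ (degree_divByMonic_lt _ _ hp ?_)
  · exact fun h => eval_divByMonic_pow_rootMultiplicity_ne_zero x hp (by rw [h, eval_zero])
  · rw [degree_pow' (by rw [leadingCoeff_X_sub_C, one_pow]; exact one_ne_zero), degree_X_sub_C,
      nsmul_one, Nat.cast_pos]
    exact (rootMultiplicity_pos hp).2 hx

theorem rootMultiplicity_divByMonic_pow_rootMultiplicity_of_ne [IsDomain R] (p : R[X]) {x y : R}
    (hyx : y ≠ x) :
    (p /ₘ (X - C x) ^ p.rootMultiplicity x).rootMultiplicity y = p.rootMultiplicity y := by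
  rcases eq_or_ne p 0 with rfl | hp
  · rw [zero_divByMonic]
  have hpq := p.pow_mul_divByMonic_rootMultiplicity_eq x
  have hy : ¬((X - C x) ^ p.rootMultiplicity x).IsRoot y := by
    rw [IsRoot.def, eval_pow, eval_sub, eval_X, eval_C]
    exact pow_ne_zero _ (sub_ne_zero.2 hyx)
  have := rootMultiplicity_mul (x := y) (hpq ▸ hp)
  rw [hpq, rootMultiplicity_eq_zero hy, zero_add] at this
  exact this.symm

end CommRing

theorem exists_eval_neg_and_eval_pos_of_odd_rootMultiplicity {K : Type*} [Field K] [LinearOrder K]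
    [IsStrictOrderedRing K] [TopologicalSpace K] [OrderTopology K] {p : K[X]} {x : K}
    (hodd : Odd (p.rootMultiplicity x)) : ∃ a b, p.eval a < 0 ∧ 0 < p.eval b := by
  have hp : p ≠ 0 := by rintro rfl; simp at hodd
  set q := p /ₘ (X - C x) ^ p.rootMultiplicity x
  set c := q.eval x
  have hc : c ≠ 0 := eval_divByMonic_pow_rootMultiplicity_ne_zero x hp
  have hq : ∀ᶠ y in 𝓝 x, 0 < q.eval y * c :=
    ((q.continuous.tendsto x).mul_const c).eventually (lt_mem_nhds (mul_self_pos.2 hc))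
  obtain ⟨a, hqa, hax⟩ := ((hq.filter_mono nhdsWithin_le_nhds).and self_mem_nhdsWithin).exists
    (f := 𝓝[<] x)
  obtain ⟨b, hqb, hxb⟩ := ((hq.filter_mono nhdsWithin_le_nhds).and self_mem_nhdsWithin).exists
    (f := 𝓝[>] x)
  have hpa : p.eval a * c < 0 := by
    rw [eval_eq_sub_pow_rootMultiplicity_mul_eval_divByMonic p x, mul_assoc]
    exact mul_neg_of_neg_of_pos (hodd.pow_neg (sub_neg.2 hax)) hqa
  have hpb : 0 < p.eval b * c := by
    rw [eval_eq_sub_pow_rootMultiplicity_mul_eval_divByMonic p x, mul_assoc]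
    exact mul_pos (pow_pos (sub_pos.2 hxb) _) hqb
  rcases hc.lt_or_gt with hc | hc
  · exact ⟨b, a, neg_of_mul_pos_left hpb hc.le, pos_of_mul_neg_left hpa hc.le⟩
  · exact ⟨a, b, neg_of_mul_neg_left hpa hc.le, pos_of_mul_pos_left hpb hc.le⟩

theorem exists_odd_rootMultiplicity_of_eval_neg_of_eval_pos {p : ℝ[X]} {a b : ℝ}
    (ha : p.eval a < 0) (hb : 0 < p.eval b) : ∃ x, Odd (p.rootMultiplicity x) := by
  induction hn : p.natDegree using Nat.strong_induction_on generalizing p with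
  | _ n ih =>
  have hp : p ≠ 0 := by rintro rfl; simp at ha
  obtain ⟨x, -, hx⟩ := intermediate_value_uIcc p.continuous.continuousOn
    (Set.mem_uIcc.2 (Or.inl ⟨ha.le, hb.le⟩))
  refine (Nat.even_or_odd (p.rootMultiplicity x)).elim (fun heven => ?_) fun hodd => ⟨x, hodd⟩
  set q := p /ₘ (X - C x) ^ p.rootMultiplicity x
  have hqa : q.eval a < 0 := neg_of_mul_neg_right
    (eval_eq_sub_pow_rootMultiplicity_mul_eval_divByMonic p x a ▸ ha) (heven.pow_nonneg _)
  have hqb : 0 < q.eval b := pos_of_mul_pos_right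
    (eval_eq_sub_pow_rootMultiplicity_mul_eval_divByMonic p x b ▸ hb) (heven.pow_nonneg _)
  obtain ⟨y, hy⟩ := ih _ (hn ▸ natDegree_divByMonic_pow_rootMultiplicity_lt hp hx) hqa hqb rfl
  have hyx : y ≠ x := by
    rintro rfl
    rw [rootMultiplicity_eq_zero (eval_divByMonic_pow_rootMultiplicity_ne_zero y hp)] at hy
    exact Nat.not_odd_zero hy
  exact ⟨y, rootMultiplicity_divByMonic_pow_rootMultiplicity_of_ne p hyx ▸ hy⟩

end Polynomial

theorem sign_change_iff_odd_multiplicity_root_general (p : Polynomial ℝ) :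
    (∃ a b : ℝ, p.eval a < 0 ∧ 0 < p.eval b) ↔
    ∃ x : ℝ, Odd (Polynomial.rootMultiplicity x p) :=
  ⟨fun ⟨_, _, ha, hb⟩ => Polynomial.exists_odd_rootMultiplicity_of_eval_neg_of_eval_pos ha hb,
    fun ⟨_, hodd⟩ => Polynomial.exists_eval_neg_and_eval_pos_of_odd_rootMultiplicity hodd⟩

theorem sign_change_iff_odd_multiplicity_root (p : Polynomial ℝ) (hp : p ≠ 0) :
    (∃ a b : ℝ, p.eval a < 0 ∧ 0 < p.eval b) ↔
    ∃ x : ℝ, Odd (Polynomial.rootMultiplicity x p) :=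
  sign_change_iff_odd_multiplicity_root_general p
end
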